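/- arXiv:2303.02055 — 2 statements merged into one kernel-verified Lean document; each statement's English description precedes it below -/
import Mathlib

section
/- Fix a ∈ [1,3] and r ∈ (0, 1/16]. Suppose for each k ≥ 0 a function a_k : {−1,1}^k → [1,a] is given, with a_0 ≡ 1. Define f : 𝓔 → ℝ by f(ε) = Σ_{k=1}^∞ (a_{k−1}(ε_1,…,ε_{k−1})/2) r^{k−1} ε_k, and for n ≥ 1 define f_n : 𝓔_n → ℝ by f_n(ε) = Σ_{k=1}^{n} (a_{k−1}(ε_1,…,ε_{k−1})/2) r^{k−1} ε_k. Then for all ε ≠ ε′ in 𝓔, (1 − ar/(1−r)) r^{m(ε,ε′)−1} ≤ |f(ε) − f(ε′)| ≤ (a/(1−r)) r^{m(ε,ε′)−1}, and the same two-sided inequality holds for f_n on 𝓔_n (with m(ε,ε′) ≤ n the first index of disagreement). In particular f and each f_n are injective and bi-Lipschitz from (𝓔, dist_r) (respectively (𝓔_n, dist_r)) onto their images. -/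
noncomputable section

/-- The sign `±1 : ℝ` associated to a boolean letter (so `𝓔 = {−1,1}^{ℕ≥1}` is encoded as
`ℕ → Bool`, index `k` corresponding to the paper's coordinate `ε_{k+1}`). -/
def sgn (b : Bool) : ℝ := if b then 1 else -1

/-- `f(ε) = Σ_{k=1}^∞ (a_{k−1}(ε)/2) r^{k−1} ε_k`, written with 0-based indices:
`f(ε) = Σ_{k≥0} (A k ε / 2) r^k sgn(ε k)`. -/
def fInf (r : ℝ) (A : ℕ → (ℕ → Bool) → ℝ) (ε : ℕ → Bool) : ℝ :=
  ∑' k : ℕ, A k ε / 2 * r ^ k * sgn (ε k)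

/-- The finite approximation `f_n(ε) = Σ_{k=1}^{n} (a_{k−1}(ε)/2) r^{k−1} ε_k`
(0-based: sum over `k < n`). -/
def fN (r : ℝ) (A : ℕ → (ℕ → Bool) → ℝ) (n : ℕ) (ε : ℕ → Bool) : ℝ :=
  ∑ k ∈ Finset.range n, A k ε / 2 * r ^ k * sgn (ε k)

/-- A word of length `n` (an element of `𝓔_n = {−1,1}^{{1,…,n}}`), extended to an infinite
word by `false` (i.e. `−1`). -/
def extWord (n : ℕ) (σ : Fin n → Bool) : ℕ → Bool :=
  fun k => if h : k < n then σ ⟨k, h⟩ else false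

/-!
If `ε` and `ε'` first differ at index `m`, the termwise difference of the series for `f(ε)` and
`f(ε')` vanishes before `m` (the coefficients only see the common prefix), has absolute value
`a_m r^m ∈ [r^m, a r^m]` at `m`, and is at most `a r^k` afterwards. The tail beyond `m` is thus
at most `a r^(m+1) / (1 - r)`, which gives both bounds; for `f_n` the tail is merely truncated.
Since `a r < 1 - r`, the lower bound is positive, whence injectivity.
-/

theorem abs_tsum_nat_add_le_geometric {g : ℕ → ℝ} {a r : ℝ} (hr0 : 0 ≤ r) (hr1 : r < 1)
    (hg : ∀ k, |g k| ≤ a * r ^ k) (n : ℕ) :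
    |∑' i, g (i + n)| ≤ a * r ^ n / (1 - r) := by
  have hgeom : HasSum (fun i => a * r ^ n * r ^ i) (a * r ^ n / (1 - r)) := by
    simpa only [div_eq_mul_inv] using (hasSum_geometric_of_lt_one hr0 hr1).mul_left (a * r ^ n)
  rw [← Real.norm_eq_abs]
  refine tsum_of_norm_bounded hgeom fun i => ?_
  calc ‖g (i + n)‖ ≤ a * r ^ (i + n) := hg (i + n)
    _ = a * r ^ n * r ^ i := by ring

theorem abs_le_of_hasSum_of_leading_term {g : ℕ → ℝ} {s a r : ℝ} {m : ℕ} (hr0 : 0 ≤ r)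
    (hr1 : r < 1) (hs : HasSum g s) (hzero : ∀ k < m, g k = 0) (hlead : r ^ m ≤ |g m|)
    (hg : ∀ k, |g k| ≤ a * r ^ k) :
    (1 - a * r / (1 - r)) * r ^ m ≤ |s| ∧ |s| ≤ a / (1 - r) * r ^ m := by
  have hsplit : s = g m + ∑' i, g (i + (m + 1)) := by
    rw [← hs.tsum_eq, ← hs.summable.sum_add_tsum_nat_add (m + 1), Finset.sum_range_succ,
      Finset.sum_eq_zero fun k hk => hzero k (Finset.mem_range.mp hk), zero_add]
  have htail := abs_tsum_nat_add_le_geometric hr0 hr1 hg (m + 1)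
  have h1r : 1 - r ≠ 0 := by linarith
  have hlow : (1 - a * r / (1 - r)) * r ^ m = r ^ m - a * r ^ (m + 1) / (1 - r) := by
    field_simp; ring
  have hup : a / (1 - r) * r ^ m = a * r ^ m + a * r ^ (m + 1) / (1 - r) := by
    field_simp; ring
  rw [hsplit, hlow, hup]
  constructor
  · linarith [abs_sub_abs_le_abs_add (g m) (∑' i, g (i + (m + 1)))]
  · linarith [abs_add_le (g m) (∑' i, g (i + (m + 1))), hg m]

def fTerm (r : ℝ) (A : ℕ → (ℕ → Bool) → ℝ) (ε : ℕ → Bool) (k : ℕ) : ℝ :=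
  A k ε / 2 * r ^ k * sgn (ε k)

section Terms

variable {a r : ℝ} {A : ℕ → (ℕ → Bool) → ℝ} {ε ε' : ℕ → Bool}

theorem abs_sgn (b : Bool) : |sgn b| = 1 := by
  cases b <;> simp [sgn]

theorem abs_sgn_sub_sgn {b b' : Bool} (h : b ≠ b') : |sgn b - sgn b'| = 2 := by
  cases b <;> cases b' <;> simp_all [sgn] <;> norm_num

theorem abs_fTerm_le (hr0 : 0 ≤ r) {k : ℕ} (h0 : 0 ≤ A k ε) (ha : A k ε ≤ a) :
    |fTerm r A ε k| ≤ a / 2 * r ^ k := by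
  rw [fTerm, abs_mul, abs_sgn, mul_one, abs_of_nonneg (by positivity)]
  gcongr

theorem abs_fTerm_sub_le (hr0 : 0 ≤ r) (hA : ∀ k ε, 1 ≤ A k ε ∧ A k ε ≤ a) (k : ℕ) :
    |fTerm r A ε k - fTerm r A ε' k| ≤ a * r ^ k := by
  have h := abs_fTerm_le (ε := ε) hr0 (by linarith [hA k ε]) (hA k ε).2
  have h' := abs_fTerm_le (ε := ε') hr0 (by linarith [hA k ε']) (hA k ε').2
  linarith [abs_sub (fTerm r A ε k) (fTerm r A ε' k)]

theorem summable_fTerm (hr0 : 0 ≤ r) (hr1 : r < 1) (hA : ∀ k ε, 1 ≤ A k ε ∧ A k ε ≤ a) :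
    Summable (fTerm r A ε) :=
  ((summable_geometric_of_lt_one hr0 hr1).mul_left (a / 2)).of_norm_bounded fun k =>
    abs_fTerm_le hr0 (by linarith [hA k ε]) (hA k ε).2

variable (hAdep : ∀ k ε ε', (∀ j < k, ε j = ε' j) → A k ε = A k ε')
include hAdep

theorem fTerm_eq_of_lt {k m : ℕ} (hm : ∀ j < m, ε j = ε' j) (hk : k < m) :
    fTerm r A ε k = fTerm r A ε' k := by
  rw [fTerm, fTerm, hAdep k ε ε' fun j hj => hm j (hj.trans hk), hm k hk]

theorem abs_fTerm_sub_of_first_diff (hr0 : 0 ≤ r) (hA : ∀ k ε, 1 ≤ A k ε ∧ A k ε ≤ a) {m : ℕ}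
    (hm : ∀ j < m, ε j = ε' j) (hne : ε m ≠ ε' m) :
    r ^ m ≤ |fTerm r A ε m - fTerm r A ε' m| := by
  have hsub : fTerm r A ε m - fTerm r A ε' m = A m ε / 2 * r ^ m * (sgn (ε m) - sgn (ε' m)) := by
    rw [fTerm, fTerm, hAdep m ε ε' hm]; ring
  rw [hsub, abs_mul, abs_sgn_sub_sgn hne,
    abs_of_nonneg (mul_nonneg (by linarith [hA m ε]) (pow_nonneg hr0 m))]
  nlinarith [hA m ε, pow_nonneg hr0 m]

theorem abs_fInf_sub_bounds (hr0 : 0 ≤ r) (hr1 : r < 1) (hA : ∀ k ε, 1 ≤ A k ε ∧ A k ε ≤ a)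
    {m : ℕ} (hm : ∀ j < m, ε j = ε' j) (hne : ε m ≠ ε' m) :
    (1 - a * r / (1 - r)) * r ^ m ≤ |fInf r A ε - fInf r A ε'| ∧
      |fInf r A ε - fInf r A ε'| ≤ a / (1 - r) * r ^ m :=
  abs_le_of_hasSum_of_leading_term hr0 hr1
    ((summable_fTerm hr0 hr1 hA).hasSum.sub (summable_fTerm hr0 hr1 hA).hasSum)
    (fun _ hk => sub_eq_zero.mpr (fTerm_eq_of_lt hAdep hm hk))
    (abs_fTerm_sub_of_first_diff hAdep hr0 hA hm hne) (abs_fTerm_sub_le hr0 hA)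

theorem abs_fN_sub_bounds (hr0 : 0 ≤ r) (hr1 : r < 1) (hA : ∀ k ε, 1 ≤ A k ε ∧ A k ε ≤ a)
    {m n : ℕ} (hmn : m < n) (hm : ∀ j < m, ε j = ε' j) (hne : ε m ≠ ε' m) :
    (1 - a * r / (1 - r)) * r ^ m ≤ |fN r A n ε - fN r A n ε'| ∧
      |fN r A n ε - fN r A n ε'| ≤ a / (1 - r) * r ^ m := by
  set g : ℕ → ℝ := fun k => if k < n then fTerm r A ε k - fTerm r A ε' k else 0
  have hs : HasSum g (fN r A n ε - fN r A n ε') := by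
    have h : HasSum g (∑ k ∈ Finset.range n, g k) :=
      hasSum_sum_of_ne_finset_zero fun _ hk => if_neg (by simpa using hk)
    rwa [Finset.sum_congr rfl fun k hk => if_pos (Finset.mem_range.mp hk),
      Finset.sum_sub_distrib] at h
  refine abs_le_of_hasSum_of_leading_term hr0 hr1 hs (fun k hk => ?_) ?_ fun k => ?_
  · simp only [g, fTerm_eq_of_lt hAdep hm hk, sub_self, ite_self]
  · simpa only [g, if_pos hmn] using abs_fTerm_sub_of_first_diff hAdep hr0 hA hm hne
  · have hbound := abs_fTerm_sub_le (ε := ε) (ε' := ε') hr0 hA k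
    simp only [g]
    split_ifs
    · exact hbound
    · simpa using (abs_nonneg _).trans hbound

end Terms

theorem eq_of_lt_find_ne {ε ε' : ℕ → Bool} (h : ε ≠ ε') :
    ∀ j < Nat.find (Function.ne_iff.mp h), ε j = ε' j :=
  fun _ hj => not_not.mp (Nat.find_min _ hj)

theorem extWord_injective (n : ℕ) : Function.Injective (extWord n) := by
  intro σ σ' h
  funext i
  simpa [extWord] using congrFun h i

theorem extWord_of_le {n k : ℕ} (σ : Fin n → Bool) (hk : n ≤ k) : extWord n σ k = false :=
  dif_neg (not_lt.mpr hk)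

theorem find_ne_extWord_lt {n : ℕ} {σ σ' : Fin n → Bool} (h : extWord n σ ≠ extWord n σ') :
    Nat.find (Function.ne_iff.mp h) < n := by
  by_contra hn
  rw [not_lt] at hn
  exact Nat.find_spec (Function.ne_iff.mp h) ((extWord_of_le σ hn).trans (extWord_of_le σ' hn).symm)

theorem stmt1_general (a r : ℝ) (ha3 : a ≤ 3) (hr0 : 0 < r) (hr1 : r ≤ 1 / 16)
    (A : ℕ → (ℕ → Bool) → ℝ)
    (hAbd : ∀ k ε, 1 ≤ A k ε ∧ A k ε ≤ a)
    (hAdep : ∀ k ε ε', (∀ j < k, ε j = ε' j) → A k ε = A k ε') :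
    (∀ (ε ε' : ℕ → Bool) (h : ε ≠ ε'),
      (1 - a * r / (1 - r)) * r ^ Nat.find (Function.ne_iff.mp h)
          ≤ |fInf r A ε - fInf r A ε'| ∧
      |fInf r A ε - fInf r A ε'| ≤ a / (1 - r) * r ^ Nat.find (Function.ne_iff.mp h)) ∧
    (∀ (n : ℕ) (σ σ' : Fin n → Bool) (h : extWord n σ ≠ extWord n σ'),
      (1 - a * r / (1 - r)) * r ^ Nat.find (Function.ne_iff.mp h)
          ≤ |fN r A n (extWord n σ) - fN r A n (extWord n σ')| ∧
      |fN r A n (extWord n σ) - fN r A n (extWord n σ')|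
          ≤ a / (1 - r) * r ^ Nat.find (Function.ne_iff.mp h)) ∧
    Function.Injective (fInf r A) ∧
    (∀ n : ℕ, Function.Injective (fun σ : Fin n → Bool => fN r A n (extWord n σ))) := by
  have hr1' : r < 1 := by linarith
  have hInf := fun ε ε' (h : ε ≠ ε') => abs_fInf_sub_bounds hAdep hr0.le hr1' hAbd
    (eq_of_lt_find_ne h) (Nat.find_spec (Function.ne_iff.mp h))
  have hN := fun n (σ σ' : Fin n → Bool) (h : extWord n σ ≠ extWord n σ') =>
    abs_fN_sub_bounds hAdep hr0.le hr1' hAbd (find_ne_extWord_lt h) (eq_of_lt_find_ne h)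
      (Nat.find_spec (Function.ne_iff.mp h))
  have hc : 0 < 1 - a * r / (1 - r) := by
    rw [sub_pos, div_lt_one (by linarith)]
    nlinarith
  have hsep : ∀ {x y : ℝ} (m : ℕ), (1 - a * r / (1 - r)) * r ^ m ≤ |x - y| → x ≠ y :=
    fun m h hxy => by
      rw [hxy, sub_self, abs_zero] at h
      exact (mul_pos hc (pow_pos hr0 m)).not_ge h
  refine ⟨hInf, hN, fun ε ε' hf => ?_, fun n σ σ' hf => ?_⟩
  · by_contra h
    exact hsep _ (hInf ε ε' h).1 hf
  · by_contra h
    have h' : extWord n σ ≠ extWord n σ' := (extWord_injective n).ne h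
    exact hsep _ (hN n σ σ' h').1 hf

/-- For `a ∈ [1,3]`, `r ∈ (0,1/16]` and coefficients `a_k(ε) ∈ [1,a]`
(depending only on the first `k` letters, `a_0 ≡ 1`), the maps `f` and `f_n` satisfy
`(1 − ar/(1−r)) r^{m(ε,ε′)−1} ≤ |f(ε) − f(ε′)| ≤ (a/(1−r)) r^{m(ε,ε′)−1}`,
where `m(ε,ε′)` is the first index of disagreement; in particular `f` and the `f_n`
are injective (bi-Lipschitz from `(𝓔, dist_r)` onto their images). -/
theorem stmt1 (a r : ℝ) (ha1 : 1 ≤ a) (ha3 : a ≤ 3) (hr0 : 0 < r) (hr1 : r ≤ 1 / 16)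
    (A : ℕ → (ℕ → Bool) → ℝ)
    (hA0 : ∀ ε, A 0 ε = 1)
    (hAbd : ∀ k ε, 1 ≤ A k ε ∧ A k ε ≤ a)
    (hAdep : ∀ k ε ε', (∀ j < k, ε j = ε' j) → A k ε = A k ε') :
    (∀ (ε ε' : ℕ → Bool) (h : ε ≠ ε'),
      (1 - a * r / (1 - r)) * r ^ Nat.find (Function.ne_iff.mp h)
          ≤ |fInf r A ε - fInf r A ε'| ∧
      |fInf r A ε - fInf r A ε'| ≤ a / (1 - r) * r ^ Nat.find (Function.ne_iff.mp h)) ∧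
    (∀ (n : ℕ) (σ σ' : Fin n → Bool) (h : extWord n σ ≠ extWord n σ'),
      (1 - a * r / (1 - r)) * r ^ Nat.find (Function.ne_iff.mp h)
          ≤ |fN r A n (extWord n σ) - fN r A n (extWord n σ')| ∧
      |fN r A n (extWord n σ) - fN r A n (extWord n σ')|
          ≤ a / (1 - r) * r ^ Nat.find (Function.ne_iff.mp h)) ∧
    Function.Injective (fInf r A) ∧
    (∀ n : ℕ, Function.Injective (fun σ : Fin n → Bool => fN r A n (extWord n σ))) :=
  stmt1_general a r ha3 hr0 hr1 A hAbd hAdep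

end
end

section
/- Let δ ∈ (0,1) and C₀ ≥ 1, let K ⊂ ℝ×{0} ⊂ ℝ² be compact with at least two points, and let μ be a Borel measure with support in K satisfying C₀^{−1}ρ^δ ≤ μ(B(x,ρ)) ≤ C₀ρ^δ for all x ∈ K and 0 < ρ ≤ diam K. Then there is a constant C > 0, depending only on δ and C₀, such that for every x₀ ∈ K, every 0 < R ≤ 1, and y₀ = x₀ + (0,R), one has ∫_K ln(|y₀−z|/|x₀−z|) dμ(z) ≤ C R^δ. -/
/-!
For `z` on the real axis, `log (‖x₀ + R i - z‖ / ‖x₀ - z‖) = ½ log (1 + R² / ‖x₀ - z‖²)`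
is nonnegative, and its superlevel set at height `t > 0` lies in the ball about `x₀` of
radius `R (e^{2t} - 1)^{-1/2}`. The upper mass bound, which extends to all radii because
`μ` lives on `K`, and the layer-cake formula bound the integral by
`C₀ R^δ ∫₀^∞ (e^{2t} - 1)^{-δ/2} dt`; since `e^{2t} - 1 ≥ t e^t`, this is at most a Gamma
integral, finite for `δ < 2`.
-/

open MeasureTheory Set Metric Real

section RealAxis

variable {w : ℂ} (R : ℝ)

lemma norm_add_mul_I_sq (hw : w.im = 0) : ‖w + R * Complex.I‖ ^ 2 = ‖w‖ ^ 2 + R ^ 2 := by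
  rw [Complex.sq_norm, Complex.sq_norm, Complex.normSq_apply, Complex.normSq_apply]
  simp [hw, sq]

lemma norm_le_norm_add_mul_I (hw : w.im = 0) : ‖w‖ ≤ ‖w + R * Complex.I‖ :=
  (pow_le_pow_iff_left₀ (norm_nonneg _) (norm_nonneg _) two_ne_zero).1
    (by rw [norm_add_mul_I_sq R hw]; nlinarith)

lemma log_norm_add_mul_I_div_norm_nonneg (hw : w.im = 0) :
    0 ≤ log (‖w + R * Complex.I‖ / ‖w‖) := by
  rcases eq_or_ne w 0 with rfl | hw0
  · simp
  · exact log_nonneg ((one_le_div (norm_pos_iff.2 hw0)).2 (norm_le_norm_add_mul_I R hw))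

lemma norm_le_of_lt_log_norm_add_mul_I_div_norm (hw : w.im = 0) {t : ℝ} (ht : 0 < t)
    (h : t < log (‖w + R * Complex.I‖ / ‖w‖)) :
    ‖w‖ ≤ |R| * (exp (2 * t) - 1) ^ (-(1 / 2 : ℝ)) := by
  have hw0 : w ≠ 0 := by rintro rfl; simp at h; linarith
  have hpos : 0 < ‖w‖ := norm_pos_iff.2 hw0
  have hu : 0 < exp (2 * t) - 1 := sub_pos.2 (one_lt_exp_iff.2 (by linarith))
  have hexp : exp t * ‖w‖ < ‖w + R * Complex.I‖ :=
    (lt_div_iff₀ hpos).1 ((lt_log_iff_exp_lt (div_pos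
      (hpos.trans_le (norm_le_norm_add_mul_I R hw)) hpos)).1 h)
  have hsq : ‖w‖ ^ 2 * (exp (2 * t) - 1) < R ^ 2 := by
    have h2 := pow_lt_pow_left₀ hexp (by positivity) two_ne_zero
    rw [norm_add_mul_I_sq R hw, mul_pow, ← exp_nat_mul] at h2
    push_cast at h2
    linarith
  rw [rpow_neg hu.le, ← sqrt_eq_rpow, ← div_eq_mul_inv, le_div_iff₀ (sqrt_pos.2 hu)]
  calc ‖w‖ * √(exp (2 * t) - 1) = √(‖w‖ ^ 2 * (exp (2 * t) - 1)) := by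
        rw [sqrt_mul (by positivity), sqrt_sq (norm_nonneg _)]
    _ ≤ √(R ^ 2) := sqrt_le_sqrt hsq.le
    _ = |R| := sqrt_sq_eq_abs R

end RealAxis

-- The exponent `1 - s - 1` matches the Gamma integral `∫ t ^ (a - 1) * exp (-(r * t))`.
lemma exp_two_mul_sub_one_rpow_neg_le {s t : ℝ} (hs : 0 ≤ s) (ht : 0 < t) :
    (exp (2 * t) - 1) ^ (-s) ≤ t ^ (1 - s - 1) * exp (-(s * t)) := by
  have hsinh : exp (2 * t) - 1 = 2 * exp t * sinh t := by
    rw [sinh_eq, exp_neg, two_mul, exp_add]; field_simp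
  have hle : t * exp t ≤ exp (2 * t) - 1 := by
    rw [hsinh]; nlinarith [self_le_sinh_iff.2 ht.le, exp_pos t]
  calc (exp (2 * t) - 1) ^ (-s) ≤ (t * exp t) ^ (-s) :=
        rpow_le_rpow_of_nonpos (by positivity) hle (neg_nonpos.2 hs)
    _ = t ^ (1 - s - 1) * exp (-(s * t)) := by
        rw [mul_rpow ht.le (exp_pos t).le, ← exp_mul]; ring_nf

lemma lintegral_exp_two_mul_sub_one_rpow_neg_le {s : ℝ} (hs0 : 0 < s) (hs1 : s < 1) :
    ∫⁻ t in Ioi 0, ENNReal.ofReal ((exp (2 * t) - 1) ^ (-s)) ≤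
      ENNReal.ofReal ((1 / s) ^ (1 - s) * Gamma (1 - s)) := by
  have hGamma := integral_rpow_mul_exp_neg_mul_Ioi (sub_pos.2 hs1) hs0
  have hnonneg :
      0 ≤ᵐ[volume.restrict (Ioi 0)] fun t : ℝ ↦ t ^ (1 - s - 1) * exp (-(s * t)) := by
    filter_upwards [ae_restrict_mem measurableSet_Ioi] with t ht
    exact mul_nonneg (rpow_nonneg (le_of_lt ht) _) (exp_pos _).le
  calc ∫⁻ t in Ioi 0, ENNReal.ofReal ((exp (2 * t) - 1) ^ (-s))
      ≤ ∫⁻ t in Ioi 0, ENNReal.ofReal (t ^ (1 - s - 1) * exp (-(s * t))) :=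
        setLIntegral_mono' measurableSet_Ioi fun t ht ↦
          ENNReal.ofReal_le_ofReal (exp_two_mul_sub_one_rpow_neg_le hs0.le ht)
    _ = ENNReal.ofReal ((1 / s) ^ (1 - s) * Gamma (1 - s)) := by
        rw [← hGamma, ofReal_integral_eq_lintegral_ofReal
          (Integrable.of_integral_ne_zero (by rw [hGamma]; positivity)) hnonneg]

lemma measure_closedBall_le_of_le_diam {X : Type*} [PseudoMetricSpace X] [MeasurableSpace X]
    {μ : Measure X} {K : Set X} {x : X} {A δ : ℝ} (hK : Bornology.IsBounded K)
    (hKc : μ Kᶜ = 0) (hdiam : 0 < diam K) (hx : x ∈ K) (hA : 0 ≤ A) (hδ : 0 ≤ δ)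
    (h : ∀ ρ, 0 < ρ → ρ ≤ diam K → μ (closedBall x ρ) ≤ ENNReal.ofReal (A * ρ ^ δ))
    {ρ : ℝ} (hρ : 0 < ρ) : μ (closedBall x ρ) ≤ ENNReal.ofReal (A * ρ ^ δ) := by
  have hae : closedBall x ρ ≤ᵐ[μ] closedBall x (min ρ (diam K)) := by
    filter_upwards [measure_eq_zero_iff_ae_notMem.1 hKc] with z hz hzρ
    exact mem_closedBall.2 (le_min hzρ (dist_le_diam_of_mem hK (not_not.1 hz) hx))
  calc μ (closedBall x ρ) ≤ μ (closedBall x (min ρ (diam K))) := measure_mono_ae hae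
    _ ≤ ENNReal.ofReal (A * min ρ (diam K) ^ δ) := h _ (lt_min hρ hdiam) (min_le_right _ _)
    _ ≤ ENNReal.ofReal (A * ρ ^ δ) := by gcongr; exact min_le_left _ _

section LogKernel

variable {μ : Measure ℂ} {x₀ : ℂ} {A δ R : ℝ}

lemma measure_lt_log_norm_add_mul_I_div_norm_le (hreal : ∀ᵐ z ∂μ, (x₀ - z).im = 0)
    (hA : 0 ≤ A) (hR : 0 < R)
    (hball : ∀ ρ, 0 < ρ → μ (closedBall x₀ ρ) ≤ ENNReal.ofReal (A * ρ ^ δ))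
    {t : ℝ} (ht : 0 < t) :
    μ {z | t < log (‖x₀ - z + R * Complex.I‖ / ‖x₀ - z‖)} ≤
      ENNReal.ofReal (A * R ^ δ) * ENNReal.ofReal ((exp (2 * t) - 1) ^ (-(δ / 2))) := by
  have hu : 0 < exp (2 * t) - 1 := sub_pos.2 (one_lt_exp_iff.2 (by linarith))
  set ρ := R * (exp (2 * t) - 1) ^ (-(1 / 2 : ℝ))
  have hsub :
      {z | t < log (‖x₀ - z + R * Complex.I‖ / ‖x₀ - z‖)} ≤ᵐ[μ] closedBall x₀ ρ := by
    filter_upwards [hreal] with z hz (hlt : t < _)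
    show z ∈ closedBall x₀ ρ
    have hnorm := norm_le_of_lt_log_norm_add_mul_I_div_norm R hz ht hlt
    rwa [abs_of_pos hR, ← dist_eq_norm, ← mem_closedBall'] at hnorm
  calc _ ≤ μ (closedBall x₀ ρ) := measure_mono_ae hsub
    _ ≤ ENNReal.ofReal (A * ρ ^ δ) := hball ρ (by positivity)
    _ = _ := by
      rw [← ENNReal.ofReal_mul (by positivity), mul_rpow hR.le (by positivity),
        ← rpow_mul hu.le]
      ring_nf

theorem integral_log_norm_add_mul_I_sub_div_norm_le (hreal : ∀ᵐ z ∂μ, (x₀ - z).im = 0)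
    (hA : 0 ≤ A) (hδ0 : 0 < δ) (hδ2 : δ < 2) (hR : 0 < R)
    (hball : ∀ ρ, 0 < ρ → μ (closedBall x₀ ρ) ≤ ENNReal.ofReal (A * ρ ^ δ)) :
    ∫ z, log (‖x₀ + R * Complex.I - z‖ / ‖x₀ - z‖) ∂μ ≤
      A * R ^ δ * ((2 / δ) ^ (1 - δ / 2) * Gamma (1 - δ / 2)) := by
  have hΓ : 0 < Gamma (1 - δ / 2) := Gamma_pos_of_pos (by linarith)
  simp_rw [← sub_add_eq_add_sub]
  have hnonneg : 0 ≤ᵐ[μ] fun z ↦ log (‖x₀ - z + R * Complex.I‖ / ‖x₀ - z‖) :=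
    hreal.mono fun z hz ↦ log_norm_add_mul_I_div_norm_nonneg R hz
  have hmeas : Measurable fun z ↦ log (‖x₀ - z + R * Complex.I‖ / ‖x₀ - z‖) :=
    measurable_log.comp (by fun_prop)
  rw [integral_eq_lintegral_of_nonneg_ae hnonneg hmeas.aestronglyMeasurable]
  refine ENNReal.toReal_le_of_le_ofReal (by positivity) ?_
  rw [lintegral_eq_lintegral_meas_lt μ hnonneg hmeas.aemeasurable]
  calc _ ≤ ∫⁻ t in Ioi 0,
        ENNReal.ofReal (A * R ^ δ) * ENNReal.ofReal ((exp (2 * t) - 1) ^ (-(δ / 2))) :=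
        setLIntegral_mono' measurableSet_Ioi fun t ht ↦
          measure_lt_log_norm_add_mul_I_div_norm_le hreal hA hR hball ht
    _ = ENNReal.ofReal (A * R ^ δ) *
          ∫⁻ t in Ioi 0, ENNReal.ofReal ((exp (2 * t) - 1) ^ (-(δ / 2))) :=
        lintegral_const_mul' _ _ ENNReal.ofReal_ne_top
    _ ≤ ENNReal.ofReal (A * R ^ δ) *
          ENNReal.ofReal ((1 / (δ / 2)) ^ (1 - δ / 2) * Gamma (1 - δ / 2)) := by
        gcongr
        exact lintegral_exp_two_mul_sub_one_rpow_neg_le (half_pos hδ0) (by linarith)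
    _ = _ := by rw [← ENNReal.ofReal_mul (by positivity), one_div_div]

end LogKernel

/-- Let `δ ∈ (0,1)`, `C₀ ≥ 1`. There is `C > 0`, depending only on `δ` and
`C₀`, such that: for every compact `K ⊂ ℝ×{0} ⊂ ℝ²` (identified with the real axis of `ℂ`)
with at least two points, every Borel measure `μ` supported in `K` with
`C₀⁻¹ ρ^δ ≤ μ(B(x,ρ)) ≤ C₀ ρ^δ` for `x ∈ K`, `0 < ρ ≤ diam K`, every `x₀ ∈ K`,
`0 < R ≤ 1`, and `y₀ = x₀ + (0,R)`, one has `∫_K ln(|y₀−z|/|x₀−z|) dμ(z) ≤ C R^δ`. -/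
theorem stmt14 (δ C₀ : ℝ) (hδ0 : 0 < δ) (hδ1 : δ < 1) (hC₀ : 1 ≤ C₀) :
    ∃ C : ℝ, 0 < C ∧
      ∀ (K : Set ℂ) (μ : Measure ℂ),
        IsCompact K → K ⊆ {z : ℂ | z.im = 0} → (∃ p ∈ K, ∃ q ∈ K, p ≠ q) →
        μ Kᶜ = 0 →
        (∀ x ∈ K, ∀ ρ : ℝ, 0 < ρ → ρ ≤ Metric.diam K →
          C₀⁻¹ * ρ ^ δ ≤ (μ (Metric.closedBall x ρ)).toReal ∧
          (μ (Metric.closedBall x ρ)).toReal ≤ C₀ * ρ ^ δ) →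
        ∀ x₀ ∈ K, ∀ R : ℝ, 0 < R → R ≤ 1 →
          ∫ z, Real.log (‖x₀ + R * Complex.I - z‖ / ‖x₀ - z‖) ∂μ ≤ C * R ^ δ := by
  have hΓ : 0 < Gamma (1 - δ / 2) := Gamma_pos_of_pos (by linarith)
  refine ⟨C₀ * ((2 / δ) ^ (1 - δ / 2) * Gamma (1 - δ / 2)), by positivity, ?_⟩
  rintro K μ hK hKreal ⟨p, hp, q, hq, hpq⟩ hKc hμ x₀ hx₀ R hR -
  have hdiam : 0 < diam K :=
    (dist_pos.2 hpq).trans_le (dist_le_diam_of_mem hK.isBounded hp hq)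
  have hball : ∀ ρ, 0 < ρ → ρ ≤ diam K →
      μ (closedBall x₀ ρ) ≤ ENNReal.ofReal (C₀ * ρ ^ δ) := fun ρ hρ hρK ↦ by
    obtain ⟨hlower, hupper⟩ := hμ x₀ hx₀ ρ hρ hρK
    have hfin : μ (closedBall x₀ ρ) ≠ ⊤ :=
      (ENNReal.toReal_pos_iff.1
        ((by positivity : 0 < C₀⁻¹ * ρ ^ δ).trans_le hlower)).2.ne
    exact (ENNReal.le_ofReal_iff_toReal_le hfin (by positivity)).2 hupper
  have hreal : ∀ᵐ z ∂μ, (x₀ - z).im = 0 := by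
    filter_upwards [measure_eq_zero_iff_ae_notMem.1 hKc] with z hz
    have hx₀im : x₀.im = 0 := hKreal hx₀
    have hzim : z.im = 0 := hKreal (not_not.1 hz)
    simp [hx₀im, hzim]
  rw [mul_right_comm]
  exact integral_log_norm_add_mul_I_sub_div_norm_le hreal (by linarith) hδ0 (by linarith) hR
    fun ρ hρ ↦ measure_closedBall_le_of_le_diam hK.isBounded hKc hdiam hx₀ (by linarith)
      hδ0.le hball hρ
end
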